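/- arXiv:1809.00173 — 4 statements merged into one kernel-verified Lean document; each statement's English description precedes it below -/
import Mathlib

section
/- Let G be a finite group, φ an automorphism of G, and form the semidirect product G⋊⟨φ⟩. Let H ≤ G be a subgroup and g ∈ G an element such that the map h ↦ gφ(h)g⁻¹ maps H to H. Let χ̃ be an irreducible character of H⋊⟨ι_g∘φ⟩ whose restriction χ to H is irreducible, and let ρ̃ be an irreducible character of G⋊⟨φ⟩ whose restriction ρ to G is irreducible. Then the absolute value of the inner product over the coset G.φ of ρ̃ with the coset induction Ind_{H.gφ}^{G.φ}(χ̃) is at most ⟨ρ, Ind_H^G(χ)⟩_G. In particular, if the former is nonzero then ⟨ρ, Ind_H^G(χ)⟩_G ≠ 0. -/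
/-!
`⟨ρ, Ind_H^G χ⟩_G` is the trace of the averaging idempotent `e = |H|⁻¹ Σ_h ρ(h) ⊗ conj χ(h)`,
and unfolding the coset induction turns the coset pairing into the trace of `e c` with
`c = ρ̃(g, φ) ⊗ conj χ̃(1, ψ)`. Since `c` normalises the image of `H`, it commutes with `e`; on the
range of `e` the map `e c` acts as `c`, which has finite order, so its trace is a sum of
`dim (range e) = tr e` roots of unity.
-/

open scoped BigOperators Classical

/-- `f : Γ → ℂ` is an irreducible character of the group `Γ`: the character of some
simple (finite-dimensional) representation. -/
def IsIrrChar (Γ : Type) [Group Γ] (f : Γ → ℂ) : Prop :=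
  ∃ V : FDRep ℂ Γ, CategoryTheory.Simple V ∧ f = FDRep.character V

open Module

theorem Module.End.norm_trace_le_finrank_of_pow_eq_one {V : Type*} [AddCommGroup V]
    [Module ℂ V] [FiniteDimensional ℂ V] {f : End ℂ V} {m : ℕ} (hm : m ≠ 0) (hf : f ^ m = 1) :
    ‖LinearMap.trace ℂ V f‖ ≤ finrank ℂ V := by
  have hroot : ∀ μ ∈ f.charpoly.roots, ‖μ‖ = 1 := by
    intro μ hμ
    obtain ⟨x, hx⟩ := ((End.hasEigenvalue_iff_isRoot_charpoly f μ).mpr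
      (Polynomial.isRoot_of_mem_roots hμ)).exists_hasEigenvector
    have hμm : μ ^ m • x = (1 : ℂ) • x := by rw [← hx.pow_apply, hf, one_smul, End.one_apply]
    exact Complex.norm_eq_one_of_pow_eq_one (smul_left_injective ℂ hx.2 hμm) hm
  have hsplit : f.charpoly.Splits := IsAlgClosed.splits _
  calc ‖LinearMap.trace ℂ V f‖ = ‖f.charpoly.roots.sum‖ := by
        rw [End.trace_eq_sum_roots_charpoly_of_splits hsplit]
    _ ≤ (f.charpoly.roots.map norm).sum := norm_multiset_sum_le _
    _ = finrank ℂ V := by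
        rw [Multiset.map_congr rfl hroot, Multiset.map_const', Multiset.sum_replicate,
          ← hsplit.natDegree_eq_card_roots, LinearMap.charpoly_natDegree, nsmul_one]

/-- On the range `W` of `e`, the map `e * c` restricts to `c|_W`, which has finite order, while
`tr e = dim W`. -/
theorem Module.End.norm_trace_mul_le_re_trace {V : Type*} [AddCommGroup V]
    [Module ℂ V] [FiniteDimensional ℂ V] {e c : End ℂ V} {m : ℕ} (he : IsIdempotentElem e)
    (hec : Commute e c) (hm : m ≠ 0) (hc : c ^ m = 1) :
    ‖LinearMap.trace ℂ V (e * c)‖ ≤ (LinearMap.trace ℂ V e).re := by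
  set W := LinearMap.range e
  have hmaps : ∀ x, (e * c) x ∈ W := fun x => LinearMap.mem_range_self e (c x)
  have hpow : ((e * c).restrict (p := W) (q := W) fun x _ => hmaps x) ^ m = 1 := by
    ext ⟨x, hx⟩
    rw [End.pow_restrict]
    simp only [LinearMap.coe_restrict_apply, End.one_apply]
    rw [hec.mul_pow, hc, mul_one, he.pow_eq hm]
    exact (LinearMap.IsIdempotentElem.mem_range_iff he).mp hx
  rw [(LinearMap.IsIdempotentElem.isProj_range e he).trace,
    ← LinearMap.trace_restrict_eq_of_forall_mem _ _ hmaps]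
  simpa using End.norm_trace_le_finrank_of_pow_eq_one hm hpow

theorem Matrix.norm_trace_mul_le_re_trace {n : Type*} [Fintype n] [DecidableEq n]
    {e c : Matrix n n ℂ} {m : ℕ} (he : IsIdempotentElem e) (hec : Commute e c) (hm : m ≠ 0)
    (hc : c ^ m = 1) : ‖(e * c).trace‖ ≤ e.trace.re := by
  have hcm : (toLinAlgEquiv' c) ^ m = 1 := by rw [← map_pow, hc, map_one]
  have htrace (a : Matrix n n ℂ) : LinearMap.trace ℂ _ (toLinAlgEquiv' a) = a.trace :=
    trace_toLin'_eq a
  have key := End.norm_trace_mul_le_re_trace (he.map toLinAlgEquiv') (hec.map _) hm hcm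
  rwa [← map_mul, htrace, htrace] at key

theorem isIdempotentElem_inv_card_smul_sum {K k A : Type*} [Group K] [Fintype K] [Field k]
    [CharZero k] [Ring A] [Algebra k A] (R : K →* A) :
    IsIdempotentElem ((Fintype.card K : k)⁻¹ • ∑ x, R x) := by
  have hsum : (∑ x, R x) * ∑ y, R y = (Fintype.card K : k) • ∑ y, R y := by
    calc (∑ x, R x) * ∑ y, R y = ∑ x, ∑ y, R (x * y) := by
          simp_rw [Finset.sum_mul, Finset.mul_sum, map_mul]
      _ = ∑ _x : K, ∑ y, R y := Finset.sum_congr rfl fun x _ => Equiv.sum_comp (Equiv.mulLeft x) R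
      _ = (Fintype.card K : k) • ∑ y, R y := by
          rw [Finset.sum_const, Finset.card_univ, Nat.cast_smul_eq_nsmul]
  have hcard : (Fintype.card K : k) ≠ 0 := Nat.cast_ne_zero.mpr Fintype.card_ne_zero
  rw [IsIdempotentElem, smul_mul_smul, hsum, smul_smul, mul_assoc, inv_mul_cancel₀ hcard, mul_one]

theorem commute_sum_of_mul_eq_mul {K A : Type*} [Fintype K] [NonUnitalNonAssocSemiring A]
    (R : K → A) (ψ : K ≃ K) {c : A} (hc : ∀ x, c * R x = R (ψ x) * c) :
    Commute c (∑ x, R x) := by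
  rw [Commute, SemiconjBy, Finset.mul_sum, Finset.sum_mul, ← ψ.sum_comp (fun x => R x * c)]
  exact Finset.sum_congr rfl fun x _ => hc x

theorem norm_inv_card_mul_sum_trace_le {Γ K n : Type*} [Group Γ] [Group K] [Fintype K]
    [Fintype n] [DecidableEq n] (P : Γ →* Matrix n n ℂ) (j : K →* Γ) (ψ : K ≃ K) {u : Γ}
    (hu : ∀ x, u * j x = j (ψ x) * u) (hfin : IsOfFinOrder u) :
    ‖(Fintype.card K : ℂ)⁻¹ * ∑ x, (P (j x * u)).trace‖ ≤
      ((Fintype.card K : ℂ)⁻¹ * ∑ x, (P (j x)).trace).re := by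
  set e := (Fintype.card K : ℂ)⁻¹ • ∑ x, P (j x)
  have he : IsIdempotentElem e := isIdempotentElem_inv_card_smul_sum (P.comp j)
  have hec : Commute e (P u) := ((commute_sum_of_mul_eq_mul (fun x => P (j x)) ψ
    fun x => by rw [← map_mul, hu, map_mul]).smul_right _).symm
  have hcm : P u ^ orderOf u = 1 := by rw [← map_pow, pow_orderOf_eq_one, map_one]
  have key := Matrix.norm_trace_mul_le_re_trace he hec hfin.orderOf_pos.ne' hcm
  simpa [e, Matrix.trace_sum, Finset.sum_mul] using key

instance SemidirectProduct.instFinite {N G : Type*} [Group N] [Group G] [Finite N] [Finite G]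
    {φ : G →* MulAut N} : Finite (N ⋊[φ] G) :=
  Finite.of_equiv _ SemidirectProduct.equivProd.symm

open scoped Kronecker in
def MonoidHom.kronecker {Γ₁ Γ₂ R l n : Type*} [Monoid Γ₁] [Monoid Γ₂] [CommSemiring R]
    [Fintype l] [DecidableEq l] [Fintype n] [DecidableEq n]
    (p : Γ₁ →* Matrix l l R) (q : Γ₂ →* Matrix n n R) : Γ₁ × Γ₂ →* Matrix (l × n) (l × n) R where
  toFun x := p x.1 ⊗ₖ q x.2
  map_one' := by simp
  map_mul' x y := by simp [Matrix.mul_kronecker_mul]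

theorem MonoidHom.trace_kronecker_apply {Γ₁ Γ₂ R l n : Type*} [Monoid Γ₁] [Monoid Γ₂]
    [CommSemiring R] [Fintype l] [DecidableEq l] [Fintype n] [DecidableEq n]
    (p : Γ₁ →* Matrix l l R) (q : Γ₂ →* Matrix n n R) (x : Γ₁ × Γ₂) :
    (p.kronecker q x).trace = (p x.1).trace * (q x.2).trace :=
  Matrix.trace_kronecker _ _

theorem MonoidHom.trace_apply_conj {Γ R n : Type*} [Group Γ] [CommSemiring R] [Fintype n]
    [DecidableEq n] (P : Γ →* Matrix n n R) (a b : Γ) :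
    (P (a * b * a⁻¹)).trace = (P b).trace := by
  rw [map_mul, map_mul, Matrix.trace_mul_cycle, ← map_mul, inv_mul_cancel, map_one, one_mul]

theorem SemidirectProduct.trace_apply_mk_conj {N G R n : Type*} [Group N] [Group G]
    {f : G →* MulAut N} [CommSemiring R] [Fintype n] [DecidableEq n]
    (P : N ⋊[f] G →* Matrix n n R) (x w : N) (r : G) :
    (P ⟨x⁻¹ * w * f r x, r⟩).trace = (P ⟨w, r⟩).trace := by
  rw [← P.trace_apply_conj (inl x⁻¹) ⟨w, r⟩]
  congr 2
  exact SemidirectProduct.ext (by simp) (by simp)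

theorem IsIrrChar.exists_eq_trace {Γ : Type} [Group Γ] {f : Γ → ℂ} (hf : IsIrrChar Γ f) :
    ∃ (d : ℕ) (P : Γ →* Matrix (Fin d) (Fin d) ℂ), f = fun x => (P x).trace := by
  obtain ⟨V, -, rfl⟩ := hf
  let b := Module.finBasis ℂ V
  exact ⟨_, (LinearMap.toMatrixAlgEquiv b).toMonoidHom.comp V.ρ,
    funext fun x => LinearMap.trace_eq_matrix_trace ℂ b (V.ρ x)⟩

theorem sum_ite_mul_mul_eq {G : Type*} [Group G] [Fintype G] (a b w : G) (f : G → ℂ) :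
    ∑ y, (if a * y * b = w then f y else 0) = f (a⁻¹ * w * b⁻¹) := by
  rw [Fintype.sum_eq_single (a⁻¹ * w * b⁻¹) fun y hy => if_neg fun h => hy (by rw [← h]; group)]
  rw [if_pos (by group)]

/-- The only `y` with `x y σ(x)⁻¹ = k i` is `x⁻¹ (k i) σ(x)`, where `A` takes the value
`A (k i)`. -/
theorem inv_card_mul_sum_mul_conj_induced {G ι : Type*} [Group G] [Fintype G] [Fintype ι]
    (σ : G → G) (k : ι → G) (A : G → ℂ) (B : ι → ℂ)
    (hA : ∀ x w, A (x⁻¹ * w * σ x) = A w) :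
    (Fintype.card G : ℂ)⁻¹ * ∑ y, A y *
      (starRingEnd ℂ) ((Fintype.card ι : ℂ)⁻¹ * ∑ x, ∑ i,
        if x * y * (σ x)⁻¹ = k i then B i else 0) =
    (Fintype.card ι : ℂ)⁻¹ * ∑ i, A (k i) * (starRingEnd ℂ) (B i) := by
  have hconj : ∀ y, A y * (starRingEnd ℂ) ((Fintype.card ι : ℂ)⁻¹ * ∑ x, ∑ i,
        if x * y * (σ x)⁻¹ = k i then B i else 0) =
      (Fintype.card ι : ℂ)⁻¹ * ∑ x, ∑ i,
        if x * y * (σ x)⁻¹ = k i then A y * (starRingEnd ℂ) (B i) else 0 := fun y => by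
    rw [map_mul, map_inv₀, map_natCast, mul_left_comm]
    simp only [map_sum, Finset.mul_sum, apply_ite (starRingEnd ℂ), map_zero, mul_ite, mul_zero]
  have hcollapse : ∀ x, ∑ y, ∑ i,
      (if x * y * (σ x)⁻¹ = k i then A y * (starRingEnd ℂ) (B i) else 0) =
      ∑ i, A (k i) * (starRingEnd ℂ) (B i) := fun x => by
    rw [Finset.sum_comm]
    exact Finset.sum_congr rfl fun i _ => by rw [sum_ite_mul_mul_eq, inv_inv, hA]
  simp_rw [hconj, ← Finset.mul_sum]
  rw [Finset.sum_comm]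
  simp_rw [hcollapse]
  rw [Finset.sum_const, Finset.card_univ, nsmul_eq_mul]
  field_simp

theorem stmt0_general {G : Type} [Group G] [Fintype G] (φ : MulAut G)
    (H : Subgroup G) [Fintype H] (g : G)
    (ψ : MulAut H) (hψ : ∀ h : H, ((ψ h : H) : G) = g * φ (h : G) * g⁻¹)
    (χt : (H ⋊[(Subgroup.zpowers ψ).subtype] (Subgroup.zpowers ψ)) → ℂ)
    (hχt : IsIrrChar _ χt)
    (ρt : (G ⋊[(Subgroup.zpowers φ).subtype] (Subgroup.zpowers φ)) → ℂ)
    (hρt : IsIrrChar _ ρt) :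
    ‖((Fintype.card G : ℂ)⁻¹ * ∑ y : G,
        ρt ⟨y, ⟨φ, Subgroup.mem_zpowers φ⟩⟩ *
        (starRingEnd ℂ) ((Fintype.card H : ℂ)⁻¹ * ∑ x : G, ∑ h : H,
          if x * y * (φ x)⁻¹ = (h : G) * g
          then χt ⟨h, ⟨ψ, Subgroup.mem_zpowers ψ⟩⟩ else 0))‖ ≤
      ((Fintype.card G : ℂ)⁻¹ * ∑ y : G,
        ρt ⟨y, (1 : Subgroup.zpowers φ)⟩ *
        (starRingEnd ℂ) ((Fintype.card H : ℂ)⁻¹ * ∑ x : G, ∑ h : H,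
          if x * y * x⁻¹ = (h : G)
          then χt ⟨h, (1 : Subgroup.zpowers ψ)⟩ else 0)).re ∧
    (((Fintype.card G : ℂ)⁻¹ * ∑ y : G,
        ρt ⟨y, ⟨φ, Subgroup.mem_zpowers φ⟩⟩ *
        (starRingEnd ℂ) ((Fintype.card H : ℂ)⁻¹ * ∑ x : G, ∑ h : H,
          if x * y * (φ x)⁻¹ = (h : G) * g
          then χt ⟨h, ⟨ψ, Subgroup.mem_zpowers ψ⟩⟩ else 0)) ≠ 0 →
      ((Fintype.card G : ℂ)⁻¹ * ∑ y : G,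
        ρt ⟨y, (1 : Subgroup.zpowers φ)⟩ *
        (starRingEnd ℂ) ((Fintype.card H : ℂ)⁻¹ * ∑ x : G, ∑ h : H,
          if x * y * x⁻¹ = (h : G)
          then χt ⟨h, (1 : Subgroup.zpowers ψ)⟩ else 0)) ≠ 0) := by
  obtain ⟨_, p, rfl⟩ := hρt.exists_eq_trace
  obtain ⟨_, q, rfl⟩ := hχt.exists_eq_trace
  set φ' : Subgroup.zpowers φ := ⟨φ, Subgroup.mem_zpowers φ⟩
  set ψ' : Subgroup.zpowers ψ := ⟨ψ, Subgroup.mem_zpowers ψ⟩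
  let P := p.kronecker ((starRingEnd ℂ).mapMatrix.toMonoidHom.comp q)
  let j := ((SemidirectProduct.inl (φ := (Subgroup.zpowers φ).subtype)).comp H.subtype).prod
    (SemidirectProduct.inl (φ := (Subgroup.zpowers ψ).subtype))
  let u := ((⟨g, φ'⟩ : G ⋊[(Subgroup.zpowers φ).subtype] _),
    (⟨1, ψ'⟩ : H ⋊[(Subgroup.zpowers ψ).subtype] _))
  have hu : ∀ h, u * j h = j (ψ h) * u := fun h => by
    refine Prod.ext (SemidirectProduct.ext ?_ ?_) (SemidirectProduct.ext ?_ ?_) <;>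
      simp [u, j, φ', ψ', hψ, mul_assoc]
  have htrace : ∀ x, (P x).trace = (p x.1).trace * (starRingEnd ℂ) (q x.2).trace := fun x => by
    rw [MonoidHom.trace_kronecker_apply, AddMonoidHom.map_trace]
    rfl
  have hbound := norm_inv_card_mul_sum_trace_le P j ψ.toEquiv hu (isOfFinOrder_of_finite u)
  beta_reduce
  rw [inv_card_mul_sum_mul_conj_induced φ (fun h : H => (h : G) * g) (fun y => (p ⟨y, φ'⟩).trace)
      (fun h => (q ⟨h, ψ'⟩).trace) (SemidirectProduct.trace_apply_mk_conj p · · φ'),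
    inv_card_mul_sum_mul_conj_induced (fun x => x) (fun h : H => (h : G))
      (fun y => (p ⟨y, 1⟩).trace) (fun h => (q ⟨h, 1⟩).trace)
      (SemidirectProduct.trace_apply_mk_conj p · · 1)]
  have hcoset (h : H) : (P (j h * u)).trace =
      (p ⟨h * g, φ'⟩).trace * (starRingEnd ℂ) (q ⟨h, ψ'⟩).trace := by
    rw [htrace]
    congr 4
    exact SemidirectProduct.ext (by simp [j, u]) (by simp [j, u])
  have hsubgroup (h : H) : (P (j h)).trace =
      (p ⟨h, 1⟩).trace * (starRingEnd ℂ) (q ⟨h, 1⟩).trace := htrace (j h)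
  simp only [← hcoset, ← hsubgroup]
  refine ⟨hbound, fun hne hzero => hne (norm_le_zero_iff.mp ?_)⟩
  simpa [hzero] using hbound

/-- let `G` be a finite group, `φ ∈ Aut(G)`, `H ≤ G` a subgroup and `g ∈ G` such
that `h ↦ g·φ(h)·g⁻¹` restricts to an automorphism `ψ` of `H`.  Let `χ̃` be an irreducible
character of `H⋊⟨ψ⟩` with irreducible restriction `χ` to `H`, and `ρ̃` an irreducible character
of `G⋊⟨φ⟩` with irreducible restriction `ρ` to `G`.  Then
`|⟨ρ̃, Ind_{H.gφ}^{G.φ}(χ̃)⟩_{G.φ}| ≤ ⟨ρ, Ind_H^G(χ)⟩_G`,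
and in particular if the left side is nonzero then `⟨ρ, Ind_H^G(χ)⟩_G ≠ 0`.
Here the coset `G.φ ⊆ G⋊⟨φ⟩` is parametrized by `G` via `x ↦ (x, φ)`, the coset
`H.gφ ⊆ H⋊⟨ψ⟩` by `H` via `h ↦ (h, ψ)`, the coset induction of `χ̃` has value
`|H|⁻¹ Σ_{x ∈ G, h ∈ H, x·y·φ(x)⁻¹ = h·g} χ̃(h, ψ)` at the coset element `(y, φ)`, and the
inner product over the coset is `|G|⁻¹ Σ_{y ∈ G} f(y,φ)·conj(f'(y,φ))`. -/
theorem stmt0 {G : Type} [Group G] [Fintype G] (φ : MulAut G)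
    (H : Subgroup G) [Fintype H] (g : G)
    (ψ : MulAut H) (hψ : ∀ h : H, ((ψ h : H) : G) = g * φ (h : G) * g⁻¹)
    (χt : (H ⋊[(Subgroup.zpowers ψ).subtype] (Subgroup.zpowers ψ)) → ℂ)
    (hχt : IsIrrChar _ χt)
    (hχ : IsIrrChar H (fun h : H =>
      χt ⟨h, (1 : Subgroup.zpowers ψ)⟩))
    (ρt : (G ⋊[(Subgroup.zpowers φ).subtype] (Subgroup.zpowers φ)) → ℂ)
    (hρt : IsIrrChar _ ρt)
    (hρ : IsIrrChar G (fun x : G =>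
      ρt ⟨x, (1 : Subgroup.zpowers φ)⟩)) :
    ‖((Fintype.card G : ℂ)⁻¹ * ∑ y : G,
        ρt ⟨y, ⟨φ, Subgroup.mem_zpowers φ⟩⟩ *
        (starRingEnd ℂ) ((Fintype.card H : ℂ)⁻¹ * ∑ x : G, ∑ h : H,
          if x * y * (φ x)⁻¹ = (h : G) * g
          then χt ⟨h, ⟨ψ, Subgroup.mem_zpowers ψ⟩⟩ else 0))‖ ≤
      ((Fintype.card G : ℂ)⁻¹ * ∑ y : G,
        ρt ⟨y, (1 : Subgroup.zpowers φ)⟩ *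
        (starRingEnd ℂ) ((Fintype.card H : ℂ)⁻¹ * ∑ x : G, ∑ h : H,
          if x * y * x⁻¹ = (h : G)
          then χt ⟨h, (1 : Subgroup.zpowers ψ)⟩ else 0)).re ∧
    (((Fintype.card G : ℂ)⁻¹ * ∑ y : G,
        ρt ⟨y, ⟨φ, Subgroup.mem_zpowers φ⟩⟩ *
        (starRingEnd ℂ) ((Fintype.card H : ℂ)⁻¹ * ∑ x : G, ∑ h : H,
          if x * y * (φ x)⁻¹ = (h : G) * g
          then χt ⟨h, ⟨ψ, Subgroup.mem_zpowers ψ⟩⟩ else 0)) ≠ 0 →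
      ((Fintype.card G : ℂ)⁻¹ * ∑ y : G,
        ρt ⟨y, (1 : Subgroup.zpowers φ)⟩ *
        (starRingEnd ℂ) ((Fintype.card H : ℂ)⁻¹ * ∑ x : G, ∑ h : H,
          if x * y * x⁻¹ = (h : G)
          then χt ⟨h, (1 : Subgroup.zpowers ψ)⟩ else 0)) ≠ 0) :=
  stmt0_general φ H g ψ hψ χt hχt ρt hρt
end

section
/- Let G be a finite group, H ≤ G, X a finite G-set, Y a finite H-set, and ψ : Y → X an H-equivariant map. Then for every y ∈ Y, the induced function ψ_*(π_y^Y) equals π_{ψ(y)}^X, where π_z denotes the G-invariant (resp. H-invariant) function taking value |Stab(z)| on the orbit of z and 0 elsewhere, and ψ_*(f)(x) = |H|⁻¹ Σ_{(g,y')∈G×Y, g·x=ψ(y')} f(y'). -/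
open scoped BigOperators Classical

open MulAction

lemma count_smul_eq {G X : Type*} [Group G] [Fintype G] [MulAction G X] (x z : X)
    (hz : z ∈ orbit G x) :
    (Finset.univ.filter (fun g : G => g • x = z)).card = Nat.card (stabilizer G x) := by
  obtain ⟨g₀, rfl⟩ := hz
  rw [Nat.card_eq_fintype_card, Fintype.card_subtype]
  apply Finset.card_bij' (fun g _ => g₀⁻¹ * g) (fun g _ => g₀ * g)
  · intro g hg
    simp only [Finset.mem_filter, Finset.mem_univ, true_and] at hg ⊢
    rw [mem_stabilizer_iff, mul_smul, hg, inv_smul_smul]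
  · intro g hg
    simp only [Finset.mem_filter, Finset.mem_univ, true_and, mem_stabilizer_iff] at hg ⊢
    rw [mul_smul, hg]
  · intro g _; group
  · intro g _; group

/-- The invariant function `π_x` on a `G`-set `X`, with value `|Stab_G(x)|` on the orbit of `x`
and `0` elsewhere. -/
noncomputable def piFun (G : Type*) {X : Type*} [Group G] [MulAction G X] (x : X) : X → ℂ :=
  fun y => if y ∈ MulAction.orbit G x then (Nat.card (MulAction.stabilizer G x) : ℂ) else 0

/-- Induction of functions along a map `ψ : Y → X`:
`ψ_*(f)(x) = |K|⁻¹ Σ_{(g,y) ∈ G×Y, g•x = ψ(y)} f(y)`. -/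
noncomputable def indFun (G K : Type*) {X Y : Type*} [Group G] [Fintype G] [Fintype K]
    [Fintype Y] [MulAction G X] (ψ : Y → X) (f : Y → ℂ) : X → ℂ :=
  fun x => (Fintype.card K : ℂ)⁻¹ * ∑ g : G, ∑ y : Y, if g • x = ψ y then f y else 0

/-- for an `H`-equivariant map `ψ : Y → X` from a finite `H`-set to a finite
`G`-set (`H ≤ G`), the induced function of `π_y^Y` is `π_{ψ(y)}^X`. -/
theorem stmt6 {G : Type*} [Group G] [Fintype G] (H : Subgroup G) [Fintype H]
    {X Y : Type*} [Fintype X] [Fintype Y] [MulAction G X] [MulAction H Y]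
    (ψ : Y → X) (hψ : ∀ (h : H) (y : Y), ψ (h • y) = (h : G) • ψ y) (y : Y) :
    indFun G H ψ (piFun H y) = piFun G (ψ y) := by
  funext x
  unfold indFun piFun
  rw [Finset.sum_comm]
  by_cases hx : x ∈ orbit G (ψ y)
  · simp only [hx, if_true]
    have horb : orbit G x = orbit G (ψ y) := by
      rw [orbit_eq_iff]; exact hx
    have hstab : Nat.card (stabilizer G x) = Nat.card (stabilizer G (ψ y)) :=
      Nat.card_congr (stabilizerEquivStabilizerOfOrbitRel hx).toEquiv
    have hterm : ∀ y' : Y,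
        (∑ g : G, if g • x = ψ y' then
            (if y' ∈ orbit H y then (Nat.card (stabilizer H y) : ℂ) else 0) else 0)
        = if y' ∈ orbit H y then
            ((Nat.card (stabilizer G (ψ y)) : ℂ) * (Nat.card (stabilizer H y) : ℂ)) else 0 := by
      intro y'
      by_cases hy' : y' ∈ orbit H y
      · simp only [hy', if_true]
        rw [← Finset.sum_filter, Finset.sum_const]
        have hmem : ψ y' ∈ orbit G x := by
          obtain ⟨h, rfl⟩ := hy'
          rw [horb, hψ]
          exact mem_orbit _ _
        rw [count_smul_eq x (ψ y') hmem, hstab, nsmul_eq_mul]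
      · simp [hy']
    rw [Finset.sum_congr rfl (fun y' _ => hterm y'), ← Finset.sum_filter, Finset.sum_const]
    have hcard : (Finset.univ.filter (fun y' => y' ∈ orbit H y)).card
        = Fintype.card (orbit H y) := by
      rw [Fintype.card_subtype]
    have hos := card_orbit_mul_card_stabilizer_eq_card_group H y
    rw [hcard, nsmul_eq_mul]
    have hH : (Fintype.card H : ℂ) ≠ 0 := Nat.cast_ne_zero.2 Fintype.card_ne_zero
    have h2 : ((Fintype.card (orbit H y)) : ℂ) * (Fintype.card (stabilizer H y) : ℂ)
        = (Fintype.card H : ℂ) := by exact_mod_cast congrArg Nat.cast hos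
    rw [Nat.card_eq_fintype_card (α := stabilizer H y)]
    calc (Fintype.card H : ℂ)⁻¹ * ((Fintype.card (orbit H y) : ℂ) *
          ((Nat.card (stabilizer G (ψ y)) : ℂ) * (Fintype.card (stabilizer H y) : ℂ)))
        = (Fintype.card H : ℂ)⁻¹ * (Fintype.card H : ℂ) * (Nat.card (stabilizer G (ψ y)) : ℂ) := by
          rw [← h2]; ring
      _ = _ := by rw [inv_mul_cancel₀ hH, one_mul]
  · simp only [hx, if_false]
    rw [mul_eq_zero]
    right
    apply Finset.sum_eq_zero
    intro y' _
    apply Finset.sum_eq_zero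
    intro g _
    split_ifs with h1 h2
    · exfalso
      obtain ⟨h, rfl⟩ := h2
      rw [hψ] at h1
      exact hx ⟨g⁻¹ * h, by show (g⁻¹ * (h : G)) • ψ y = x; rw [mul_smul, ← h1, inv_smul_smul]⟩
    · rfl
    · rfl
end

section
/- Let 𝒜 be a locally finite k-linear abelian category (k algebraically closed), K ∈ 𝒜 a semisimple object with endomorphism algebra A = End_𝒜(K), and let F_K = Hom_𝒜(−,K). Then for any summand A of K and any object B ∈ 𝒜, the map F_K : Hom_𝒜(B, A) → Hom_A(F_K(A), F_K(B)) sending φ to precomposition with φ is a k-linear isomorphism. -/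
open CategoryTheory CategoryTheory.Limits

universe v u

attribute [local instance] CategoryTheory.Abelian.hasFiniteBiproducts

/-- `A` is a (direct) summand of `K`. -/
def IsSummand {C : Type u} [Category.{v} C] (A K : C) : Prop :=
  ∃ (m : A ⟶ K) (p : K ⟶ A), m ≫ p = 𝟙 A

/-- The map `F_K : Hom(B,A) → Hom_{End K}(Hom(A,K), Hom(B,K))` given by precomposition,
where `Hom(−,K)` carries its left `End K`-module structure by post-composition. -/
def FKmap {C : Type u} [Category.{v} C] [Preadditive C] (K : C) {A B : C} (φ : B ⟶ A) :
    (A ⟶ K) →ₗ[End K] (B ⟶ K) where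
  toFun f := φ ≫ f
  map_add' f g := Preadditive.comp_add _ _ _ _ _ _
  map_smul' e f := by
    show φ ≫ (f ≫ e) = (φ ≫ f) ≫ e
    rw [Category.assoc]

/-- let `𝒜` be a locally finite `k`-linear abelian category (`k` algebraically
closed), `K` a semisimple object with endomorphism algebra `A = End(K)`.  Then for any summand
`A₀` of `K` and any object `B`, the map `F_K : Hom(B, A₀) → Hom_A(F_K(A₀), F_K(B))`,
`φ ↦ (f ↦ φ ≫ f)`, is a `k`-linear isomorphism. -/
theorem stmt9 {k : Type v} [Field k] [IsAlgClosed k]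
    {C : Type u} [Category.{v} C] [Abelian C] [Linear k C]
    [∀ X Y : C, Module.Finite k (X ⟶ Y)]
    (K : C) (n : ℕ) (A : Fin n → C) (hsimple : ∀ i, Simple (A i))
    (hiso : Nonempty (K ≅ ⨁ A))
    (A₀ : C) (hA₀ : IsSummand A₀ K) (B : C) :
    Function.Bijective (fun φ : B ⟶ A₀ => FKmap K φ) ∧
    (∀ φ φ' : B ⟶ A₀, FKmap K (φ + φ') = FKmap K φ + FKmap K φ') ∧
    (∀ (c : k) (φ : B ⟶ A₀) (f : A₀ ⟶ K), FKmap K (c • φ) f = c • FKmap K φ f) := by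
  obtain ⟨m, p, hmp⟩ := hA₀
  refine ⟨⟨?_, ?_⟩, ?_, ?_⟩
  · -- injective
    intro φ φ' h
    have hm : φ ≫ m = φ' ≫ m := DFunLike.congr_fun h m
    calc φ = φ ≫ m ≫ p := by rw [hmp, Category.comp_id]
      _ = φ' ≫ m ≫ p := by rw [← Category.assoc, hm, Category.assoc]
      _ = φ' := by rw [hmp, Category.comp_id]
  · -- surjective
    intro T
    refine ⟨T m ≫ p, ?_⟩
    ext f
    have hf : f = (show End K from p ≫ f) • m := by
      show f = m ≫ (p ≫ f)
      rw [← Category.assoc, hmp, Category.id_comp]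
    show (T m ≫ p) ≫ f = T f
    calc (T m ≫ p) ≫ f = T m ≫ (p ≫ f) := by rw [Category.assoc]
      _ = (show End K from p ≫ f) • T m := rfl
      _ = T ((show End K from p ≫ f) • m) := (T.map_smul _ _).symm
      _ = T f := by rw [← hf]
  · intro φ φ'
    ext f
    show (φ + φ') ≫ f = φ ≫ f + φ' ≫ f
    rw [Preadditive.add_comp]
  · intro c φ f
    show (c • φ) ≫ f = c • (φ ≫ f)
    rw [Linear.smul_comp]
end

section
/- Let G be a finite group, φ ∈ Aut(G), and g ∈ G. Then the map γ_g : G⋊⟨ι_g φ⟩ → G⋊⟨φ⟩ defined by (x, (ι_gφ)^i) ↦ (x·g·φ(g)⋯φ^{i-1}(g), φ^i) is a surjective group homomorphism whose restriction to the coset G.(ι_gφ) is a bijective G-equivariant map onto the coset G.φ; consequently the pullback γ_g^* : Class(G.φ) → Class(G.gφ) is an isometry of the spaces of G-invariant functions. -/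
/-!
Conjugation by `s = (g, φ)` in `G ⋊ ⟨φ⟩` acts on `G` as `ι_g φ`, so the identity of `G` together
with `ι_g φ ↦ s` extends to a homomorphism `γ_g`; it lies over the identity of `ℤ`, hence is onto.
On the coset `G.(ι_g φ)` it is right multiplication by `g`, a bijection commuting with
conjugation by `G`, and the isometry is the reindexing `y = x g` of the sum over `G`.
-/

open SemidirectProduct

namespace MonoidHom

variable {G K : Type*} [Group G] [Group K]

def intertwiningPairs (i : G →* K) : Subgroup (MulAut G × K) where
  carrier := {p | ∀ x, i (p.1 x) = p.2 * i x * p.2⁻¹}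
  one_mem' x := by simp
  mul_mem' {p q} hp hq x := by
    change i (p.1 (q.1 x)) = p.2 * q.2 * i x * (p.2 * q.2)⁻¹
    rw [hp, hq]
    group
  inv_mem' {p} hp x := by
    have h := hp (p.1⁻¹ x)
    rw [MulAut.apply_inv_self] at h
    simp only [Prod.fst_inv, Prod.snd_inv, inv_inv, h]
    group

end MonoidHom

namespace SemidirectProduct

section zpowersLift

variable {G K : Type*} [Group G] [Group K] (i : G →* K) (ψ : MulAut G) (s : K)

def zpowersLift (h : (ψ, s) ∈ i.intertwiningPairs) :
    G ⋊[zpowersHom (MulAut G) ψ] Multiplicative ℤ →* K :=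
  lift i (zpowersHom K s) fun n => by
    ext x
    simp only [MonoidHom.comp_apply, MulEquiv.coe_toMonoidHom, zpowersHom_apply,
      MulAut.conj_apply]
    exact i.intertwiningPairs.zpow_mem h n.toAdd x

variable (h : (ψ, s) ∈ i.intertwiningPairs)

@[simp]
theorem zpowersLift_inl (x : G) : zpowersLift i ψ s h (inl x) = i x :=
  lift_inl _ _ _ x

@[simp]
theorem zpowersLift_inr (n : Multiplicative ℤ) :
    zpowersLift i ψ s h (inr n) = s ^ n.toAdd :=
  lift_inr _ _ _ n

theorem zpowersLift_mk_ofAdd_one (x : G) :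
    zpowersLift i ψ s h ⟨x, Multiplicative.ofAdd 1⟩ = i x * s := by
  rw [mk_eq_inl_mul_inr, map_mul, zpowersLift_inl, zpowersLift_inr, toAdd_ofAdd, zpow_one]

end zpowersLift

variable {N H : Type*} [Group N] [Group H] {φ : H →* MulAut N}

theorem inl_mul_mk (x y : N) (h : H) : (inl x * ⟨y, h⟩ : N ⋊[φ] H) = ⟨x * y, h⟩ := by
  ext <;> simp

theorem inl_conj_mk (g x : N) (h : H) :
    (inl (g * φ h x * g⁻¹) : N ⋊[φ] H) = ⟨g, h⟩ * inl x * (⟨g, h⟩ : N ⋊[φ] H)⁻¹ := by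
  ext <;> simp [mul_assoc]

theorem mk_mem_inl_intertwiningPairs (g : N) (h : H) :
    ((φ h).trans (MulAut.conj g), (⟨g, h⟩ : N ⋊[φ] H)) ∈
      (inl : N →* N ⋊[φ] H).intertwiningPairs :=
  fun x => inl_conj_mk g x h

theorem surjective_of_range_inl_le {K : Type*} [Group K] (f : K →* N ⋊[φ] H)
    (hN : (inl : N →* N ⋊[φ] H).range ≤ f.range) (hH : Function.Surjective (rightHom.comp f)) :
    Function.Surjective f := by
  intro z
  obtain ⟨k, hk⟩ := hH z.right
  obtain ⟨k', hk'⟩ := hN ⟨(z * (f k)⁻¹).left, rfl⟩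
  refine ⟨k' * k, ?_⟩
  have hz : inl (z * (f k)⁻¹).left = z * (f k)⁻¹ := by
    ext
    · rfl
    · simp [mul_right, inv_right, ← hk]
  rw [map_mul, hk', hz, inv_mul_cancel_right]

end SemidirectProduct

/-- let `G` be a finite group, `φ ∈ Aut(G)` and `g ∈ G`.  Model the semidirect
products `G⋊⟨φ⟩` and `G⋊⟨ι_g∘φ⟩` as semidirect products with the cyclic group generated by the
respective automorphism (realized via `Multiplicative ℤ` and `zpowersHom`).  Then there is a
group homomorphism `γ_g : G⋊⟨ι_gφ⟩ → G⋊⟨φ⟩` with `γ_g(x, (ι_gφ)^0) = (x, φ^0)` and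
`γ_g(1, ι_gφ) = (g, φ)` (so `γ_g(x,(ι_gφ)^i) = (x·gφ(g)⋯φ^{i-1}(g), φ^i)`), which is
surjective, restricts to a bijective `G`-equivariant map from the coset `G.(ι_gφ)` onto the
coset `G.φ` (explicitly `(x, ι_gφ) ↦ (x·g, φ)`), and whose pullback
`γ_g^* : Class(G.φ) → Class(G.gφ)` is an isometry. -/
theorem stmt18 {G : Type*} [Group G] [Fintype G] (φ : MulAut G) (g : G) :
    ∃ γ : (G ⋊[zpowersHom (MulAut G) (φ.trans (MulAut.conj g))] Multiplicative ℤ) →*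
          (G ⋊[zpowersHom (MulAut G) φ] Multiplicative ℤ),
      (∀ x : G, γ (SemidirectProduct.inl x) = SemidirectProduct.inl x) ∧
      γ ⟨1, Multiplicative.ofAdd 1⟩ = ⟨g, Multiplicative.ofAdd 1⟩ ∧
      Function.Surjective γ ∧
      (∀ x : G, γ ⟨x, Multiplicative.ofAdd 1⟩ = ⟨x * g, Multiplicative.ofAdd 1⟩) ∧
      Function.Injective (fun x : G => γ ⟨x, Multiplicative.ofAdd 1⟩) ∧
      (∀ y : G, ∃ x : G, γ ⟨x, Multiplicative.ofAdd 1⟩ = ⟨y, Multiplicative.ofAdd 1⟩) ∧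
      (∀ a x : G,
        γ (SemidirectProduct.inl a * ⟨x, Multiplicative.ofAdd 1⟩ *
            (SemidirectProduct.inl a)⁻¹) =
          SemidirectProduct.inl a * γ ⟨x, Multiplicative.ofAdd 1⟩ *
            (SemidirectProduct.inl a)⁻¹) ∧
      (∀ f f' : G → ℂ,
        (Fintype.card G : ℂ)⁻¹ * ∑ x : G,
            f ((γ ⟨x, Multiplicative.ofAdd 1⟩).left) *
            (starRingEnd ℂ) (f' ((γ ⟨x, Multiplicative.ofAdd 1⟩).left)) =
          (Fintype.card G : ℂ)⁻¹ * ∑ y : G, f y * (starRingEnd ℂ) (f' y)) := by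
  have hmem := mk_mem_inl_intertwiningPairs (φ := zpowersHom (MulAut G) φ) g
    (Multiplicative.ofAdd 1)
  rw [zpowersHom_apply, toAdd_ofAdd, zpow_one] at hmem
  set γ := zpowersLift (inl : G →* G ⋊[zpowersHom (MulAut G) φ] Multiplicative ℤ) _ _ hmem
  have hinl (x : G) : γ (inl x) = inl x := zpowersLift_inl ..
  have hcoset (x : G) : γ ⟨x, Multiplicative.ofAdd 1⟩ = ⟨x * g, Multiplicative.ofAdd 1⟩ := by
    rw [zpowersLift_mk_ofAdd_one, inl_mul_mk]
  have hright : rightHom.comp γ = rightHom := by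
    refine hom_ext (MonoidHom.ext fun x => ?_) (MonoidHom.ext fun n => ?_)
    · simp [hinl]
    · change rightHom (γ (inr n)) = n
      rw [zpowersLift_inr, map_zpow]
      simp [← ofAdd_zsmul]
  refine ⟨γ, hinl, by simpa using hcoset 1, ?_, hcoset, ?_, ?_, ?_, ?_⟩
  · refine surjective_of_range_inl_le γ ?_ (hright ▸ rightHom_surjective)
    rintro _ ⟨x, rfl⟩
    exact ⟨inl x, hinl x⟩
  · intro x y hxy
    simpa only [hcoset, mul_left_inj] using congrArg SemidirectProduct.left hxy
  · exact fun y => ⟨y * g⁻¹, by rw [hcoset, inv_mul_cancel_right]⟩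
  · intro a x
    simp only [map_mul, map_inv, hinl]
  · intro f f'
    simp only [hcoset]
    congr 1
    exact Fintype.sum_equiv (Equiv.mulRight g) _ _ fun x => rfl
end
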